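/- Consider the first-order language L with two binary relation symbols, and endow the set ℕ₊ of positive natural numbers with the L-structure in which the first relation symbol is interpreted as the strict order < and the second as the divisibility relation ∣. Then the graph of multiplication, i.e. the set {v : Fin 3 → ℕ₊ | v 0 * v 1 = v 2}, is definable in this structure without parameters. -/

import Mathlib

/-- The type of relation symbols of the language `L`: two binary relation symbols. -/
inductive OrdDvdRel : ℕ → Type
  | lt : OrdDvdRel 2
  | dvd : OrdDvdRel 2

/-- The first-order language with two binary relation symbols. -/
def L : FirstOrder.Language := ⟨fun _ => Empty, OrdDvdRel⟩

/-- The `L`-structure on the positive natural numbers ℕ₊ interpreting the first relation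
symbol as the strict order `<` and the second as divisibility `∣`. -/
instance : L.Structure ℕ+ where
  funMap := fun f _ => f.elim
  RelMap := fun {n} r v =>
    match n, r, v with
    | _, .lt, v => v 0 < v 1
    | _, .dvd, v => v 0 ∣ v 1

/-!
`x * y` is the least `z` with `x ∣ z`, `y ∣ z`, `x + 1 ∣ z + y` and `y + 1 ∣ z + x`: any such `z`
is congruent to `x * y` modulo `x * (x + 1)` and `y * (y + 1)`, so `z < x * y` would make
`x * y - z` a positive common multiple of both, yet every such multiple exceeds `x * y`. Least elements of definable families are definable since `≤` is;
this gives the successor, then `z + y` for `y ∣ z` as the least multiple of `y` above `z`, and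
finally multiplication.
-/

open FirstOrder FirstOrder.Language Set

namespace Set

variable {L' : Language} {M : Type*} [L'.Structure M] {A : Set M} {α : Type*}

theorem Definable.comp₂ {R : M → M → Prop}
    (hR : A.Definable L' {u : Fin 2 → M | R (u 0) (u 1)}) {f g : (α → M) → M}
    (hf : A.DefinableFun L' f) (hg : A.DefinableFun L' g) :
    A.Definable L' {v | R (f v) (g v)} :=
  hR.preimage_map (F := fun v => ![f v, g v]) (by simp [DefinableMap, *])

theorem DefinableFun.comp₁ {h : (Fin 1 → M) → M} (hh : A.DefinableFun L' h)
    {f : (α → M) → M} (hf : A.DefinableFun L' f) : A.DefinableFun L' fun v => h ![f v] :=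
  hh.comp (by simp [DefinableMap, *])

theorem DefinableFun.comp₂ {h : (Fin 2 → M) → M} (hh : A.DefinableFun L' h)
    {f g : (α → M) → M} (hf : A.DefinableFun L' f) (hg : A.DefinableFun L' g) :
    A.DefinableFun L' fun v => h ![f v, g v] :=
  hh.comp (by simp [DefinableMap, *])

theorem DefinableFun.of_isLeast [PartialOrder M]
    (hle : A.Definable L' {u : Fin 2 → M | u 0 ≤ u 1}) {P : Set (Option α → M)}
    (hP : A.Definable L' P) {f : (α → M) → M}
    (hf : ∀ v, IsLeast {a | Option.elim' a v ∈ P} (f v)) : A.DefinableFun L' f := by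
  -- `e` puts the candidate value, bound by the universal quantifier, in the slot `none`.
  let e : Option α → Option α ⊕ Unit := Option.elim' (Sum.inr ()) (Sum.inl ∘ some)
  have hT : A.Definable L' {g : Option α ⊕ Unit → M |
      g ∘ e ∈ P → g (Sum.inl none) ≤ g (Sum.inr ())} :=
    (hP.preimage_comp e).himp (hle.preimage_comp ![Sum.inl none, Sum.inr ()])
  unfold DefinableFun
  convert hP.inter hT.forall_of_finite using 1
  ext w
  have elim_eq (u : Unit → M) : Sum.elim w u ∘ e = Option.elim' (u ()) (w ∘ some) := by
    funext o; cases o <;> rfl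
  have elim_self : Option.elim' (w none) (w ∘ some) = w := by
    funext o; cases o <;> rfl
  have isLeast_iff : IsLeast {a | Option.elim' a (w ∘ some) ∈ P} (w none) ↔
      w ∈ P ∧ ∀ u : Unit → M, Sum.elim w u ∘ e ∈ P → w none ≤ u () := by
    simp only [elim_eq, IsLeast, mem_lowerBounds, mem_ofPred_eq, elim_self]
    exact and_congr_right fun _ => ⟨fun h u => h (u ()), fun h a => h fun _ => a⟩
  simp only [Function.tupleGraph, mem_ofPred_eq, mem_inter_iff, Sum.elim_inl, Sum.elim_inr,
    ← isLeast_iff]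
  exact ⟨fun h => h ▸ hf _, (hf _).unique⟩

end Set

theorem mul_add_one_dvd_mul_sub {R : Type*} [CommRing R] {x y z : R} (hz : x ∣ z)
    (hzy : x + 1 ∣ z + y) : x * (x + 1) ∣ x * y - z := by
  have hx : x ∣ x * y - z := dvd_sub (dvd_mul_right x y) hz
  have hx1 : x + 1 ∣ x * y - z := by
    rw [show x * y - z = (x + 1) * y - (z + y) by ring]
    exact dvd_sub (dvd_mul_right _ _) hzy
  exact (IsCoprime.add_one_right_of_dvd (dvd_refl x)).mul_dvd hx hx1

theorem Int.mul_lt_of_mul_add_one_dvd {x y d : ℤ} (hx : 0 ≤ x) (hy : 0 ≤ y) (hd : 0 < d)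
    (hxd : x * (x + 1) ∣ d) (hyd : y * (y + 1) ∣ d) : x * y < d := by
  have := Int.le_of_dvd hd hxd
  have := Int.le_of_dvd hd hyd
  nlinarith [sq_nonneg (x - y)]

namespace PNat

/-- The least multiple of `y` exceeding `z`. -/
def nextMultiple (y z : ℕ+) : ℕ+ := y * ((z : ℕ) / y).succPNat

theorem isLeast_nextMultiple (y z : ℕ+) : IsLeast {u | y ∣ u ∧ z < u} (y.nextMultiple z) := by
  refine ⟨⟨dvd_mul_right _ _, ?_⟩, ?_⟩
  · rw [← coe_lt_coe, nextMultiple, mul_coe, Nat.succPNat_coe]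
    exact Nat.lt_mul_div_succ _ y.pos
  · rintro u ⟨⟨k, rfl⟩, hzu⟩
    rw [← coe_lt_coe, mul_coe, mul_comm] at hzu
    rw [nextMultiple, ← coe_le_coe, mul_coe, mul_coe, Nat.succPNat_coe]
    exact Nat.mul_le_mul_left _ ((Nat.div_lt_iff_lt_mul y.pos).mpr hzu)

theorem nextMultiple_of_dvd {y z : ℕ+} (h : y ∣ z) : y.nextMultiple z = z + y := by
  obtain ⟨k, rfl⟩ := h
  apply coe_injective
  simp [nextMultiple, Nat.mul_div_cancel_left _ y.pos, mul_add]

/-- `MulCongr x y z` says that `z ≡ x * y` modulo `x`, `x + 1`, `y` and `y + 1`. -/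
def MulCongr (x y z : ℕ+) : Prop :=
  x ∣ z ∧ y ∣ z ∧ x + 1 ∣ z + y ∧ y + 1 ∣ z + x

theorem mulCongr_mul (x y : ℕ+) : MulCongr x y (x * y) :=
  ⟨dvd_mul_right x y, dvd_mul_left y x, ⟨y, by ring⟩, ⟨x, by ring⟩⟩

theorem MulCongr.mul_le {x y z : ℕ+} (h : MulCongr x y z) : x * y ≤ z := by
  obtain ⟨hx, hy, hx1, hy1⟩ := h
  have cast_dvd {a b : ℕ+} (h : a ∣ b) : ((a : ℕ) : ℤ) ∣ ((b : ℕ) : ℤ) :=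
    Int.natCast_dvd_natCast.mpr (dvd_iff.mp h)
  have hx1 := cast_dvd hx1
  have hy1 := cast_dvd hy1
  push_cast at hx1 hy1
  have hdx := mul_add_one_dvd_mul_sub (cast_dvd hx) hx1
  have hdy := mul_add_one_dvd_mul_sub (cast_dvd hy) hy1
  rw [mul_comm ((y : ℕ) : ℤ) ((x : ℕ) : ℤ)] at hdy
  by_contra! hlt
  have hlt : ((z : ℕ) : ℤ) < (x : ℕ) * (y : ℕ) := by exact_mod_cast hlt
  have := Int.mul_lt_of_mul_add_one_dvd (by positivity) (by positivity) (by linarith) hdx hdy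
  linarith

theorem isLeast_mulCongr (x y : ℕ+) : IsLeast {z | MulCongr x y z} (x * y) :=
  ⟨mulCongr_mul x y, fun _ h => h.mul_le⟩

theorem mulCongr_iff_nextMultiple {x y z : ℕ+} :
    MulCongr x y z ↔
      x ∣ z ∧ y ∣ z ∧ x + 1 ∣ y.nextMultiple z ∧ y + 1 ∣ x.nextMultiple z :=
  and_congr_right fun hx => and_congr_right fun hy => by
    rw [nextMultiple_of_dvd hx, nextMultiple_of_dvd hy]

end PNat

theorem definable_lt : (∅ : Set ℕ+).Definable L {u : Fin 2 → ℕ+ | u 0 < u 1} :=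
  empty_definable_iff.mpr ⟨Relations.formula₂ (L := L) .lt (.var 0) (.var 1), rfl⟩

theorem definable_dvd : (∅ : Set ℕ+).Definable L {u : Fin 2 → ℕ+ | u 0 ∣ u 1} :=
  empty_definable_iff.mpr ⟨Relations.formula₂ (L := L) .dvd (.var 0) (.var 1), rfl⟩

theorem definable_le : (∅ : Set ℕ+).Definable L {u : Fin 2 → ℕ+ | u 0 ≤ u 1} := by
  simpa only [compl_ofPred, not_lt] using
    (definable_lt.comp₂ (DefinableFun.proj L (i := 1)) (DefinableFun.proj L (i := 0))).compl

namespace Set.DefinableFun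

variable {α : Type*} {f g : (α → ℕ+) → ℕ+}

@[fun_prop]
theorem add_one (hf : (∅ : Set ℕ+).DefinableFun L f) :
    (∅ : Set ℕ+).DefinableFun L fun v => f v + 1 := by
  have hsucc : (∅ : Set ℕ+).DefinableFun L fun u : Fin 1 → ℕ+ => u 0 + 1 :=
    of_isLeast definable_le (P := {w | w (some 0) < w none})
      (definable_lt.comp₂ (by fun_prop) (by fun_prop))
      fun _ => ⟨PNat.lt_add_right _ _, fun _ ha => PNat.add_one_le_iff.mpr ha⟩
  simpa using hsucc.comp₁ hf

@[fun_prop]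
theorem nextMultiple (hf : (∅ : Set ℕ+).DefinableFun L f)
    (hg : (∅ : Set ℕ+).DefinableFun L g) :
    (∅ : Set ℕ+).DefinableFun L fun v => (f v).nextMultiple (g v) := by
  have hnext : (∅ : Set ℕ+).DefinableFun L fun u : Fin 2 → ℕ+ => (u 0).nextMultiple (u 1) :=
    of_isLeast definable_le (P := {w | w (some 0) ∣ w none ∧ w (some 1) < w none})
      ((definable_dvd.comp₂ (by fun_prop) (by fun_prop)).inter
        (definable_lt.comp₂ (by fun_prop) (by fun_prop)))
      fun v => PNat.isLeast_nextMultiple (v 0) (v 1)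
  simpa using hnext.comp₂ hf hg

@[fun_prop]
theorem mul (hf : (∅ : Set ℕ+).DefinableFun L f)
    (hg : (∅ : Set ℕ+).DefinableFun L g) :
    (∅ : Set ℕ+).DefinableFun L fun v => f v * g v := by
  have hmul : (∅ : Set ℕ+).DefinableFun L fun u : Fin 2 → ℕ+ => u 0 * u 1 := by
    refine of_isLeast definable_le (P := {w | PNat.MulCongr (w (some 0)) (w (some 1)) (w none)})
      ?_ fun v => PNat.isLeast_mulCongr (v 0) (v 1)
    simp only [PNat.mulCongr_iff_nextMultiple]
    exact (definable_dvd.comp₂ (by fun_prop) (by fun_prop)).inter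
      ((definable_dvd.comp₂ (by fun_prop) (by fun_prop)).inter
      ((definable_dvd.comp₂ (by fun_prop) (by fun_prop)).inter
        (definable_dvd.comp₂ (by fun_prop) (by fun_prop))))
  simpa using hmul.comp₂ hf hg

end Set.DefinableFun

theorem mul_definable_in_lt_dvd :
    Set.Definable (∅ : Set ℕ+) L {v : Fin 3 → ℕ+ | v 0 * v 1 = v 2} :=
  DefinableFun.ofPred_eq (by fun_prop) (by fun_prop)
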